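/- arXiv:1802.04344 — 5 statements merged into one kernel-verified Lean document; each statement's English description precedes it below -/
import Mathlib

section
/- For every integer n ≥ 1 with n ≡ 0 or 2 (mod 3), the number s(n) of 1-shell totally symmetric plane partitions of n equals 0. -/
/-!
Expanding `∏ (1 + q^(6i+3))` over subsets shows that it only has monomials `q^e` with `3 ∣ e`,
so the `n`-th summand `q^(3n-2) ∏ …` only has monomials of degree `≡ 1 (mod 3)`. The constant
`1` contributes only to degree `0`.
-/

/-- `sTSPP m` is the number of 1-shell totally symmetric plane partitions of `m`,
defined as the `m`-th coefficient of the generating function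
`1 + ∑_{n≥1} q^(3n-2) ∏_{i=0}^{n-2} (1+q^(6i+3))` (truncated at `n ≤ m`, which does
not affect the coefficient of `q^m`). -/
noncomputable def sTSPP (m : ℕ) : ℤ :=
  PowerSeries.coeff m
    (1 + ∑ n ∈ Finset.Icc 1 m,
      (PowerSeries.X : PowerSeries ℤ) ^ (3 * n - 2) *
        ∏ i ∈ Finset.range (n - 1), (1 + PowerSeries.X ^ (6 * i + 3)))

open PowerSeries

theorem PowerSeries.coeff_prod_one_add_X_pow_eq_zero {ι R : Type*} [CommSemiring R]
    {k d : ℕ} (s : Finset ι) (e : ι → ℕ) (he : ∀ i ∈ s, k ∣ e i) (hd : ¬ k ∣ d) :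
    coeff d (∏ i ∈ s, (1 + X ^ e i) : R⟦X⟧) = 0 := by
  rw [Finset.prod_one_add, map_sum]
  refine Finset.sum_eq_zero fun t ht => ?_
  have hdvd : k ∣ ∑ i ∈ t, e i :=
    Finset.dvd_sum fun i hi => he i (Finset.mem_powerset.mp ht hi)
  rw [Finset.prod_pow_eq_pow_sum, coeff_X_pow, if_neg (by rintro rfl; exact hd hdvd)]

/-- For every `n ≥ 1` with `n ≡ 0` or `2 (mod 3)`, `s(n) = 0`. -/
theorem sTSPP_eq_zero_of_mod_three (n : ℕ) (hn : 1 ≤ n)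
    (h : n % 3 = 0 ∨ n % 3 = 2) : sTSPP n = 0 := by
  rw [sTSPP, map_add, coeff_one, if_neg (by omega), map_sum, zero_add]
  refine Finset.sum_eq_zero fun m hmem => ?_
  have hm : 1 ≤ m := (Finset.mem_Icc.mp hmem).1
  rw [coeff_X_pow_mul']
  split_ifs
  · exact coeff_prod_one_add_X_pow_eq_zero (k := 3) _ _
      (fun i _ => ⟨2 * i + 1, by ring⟩) (by omega)
  · rfl
end

section
/- As formal power series, φ(-q) = E(q)^2 / E(q^2), where φ(q) = ∑_{n∈ℤ} q^{n^2} and E(q) = ∏_{k≥1}(1-q^k). -/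
/-- `E d` is the formal power series `E(q^d) = ∏_{k≥1} (1 - q^(d*k))` over `ℤ`;
the `m`-th coefficient equals that of the finite partial product up to `k = m+1`. -/
noncomputable def E (d : ℕ) : PowerSeries ℤ :=
  PowerSeries.mk fun m =>
    PowerSeries.coeff m (∏ k ∈ Finset.range (m + 1), (1 - PowerSeries.X ^ (d * (k + 1))))

/-- `phiNeg d` is the formal power series `φ(-q^d)` where `φ(q) = ∑_{n∈ℤ} q^(n^2)`:
the coefficient of `q^m` is `(-1)^(m/d)` times the number of integers `n` with `n^2 = m/d`
when `d ∣ m`, and `0` otherwise. -/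
noncomputable def phiNeg (d : ℕ) : PowerSeries ℤ :=
  PowerSeries.mk fun m =>
    if d ∣ m then
      (-1 : ℤ) ^ (m / d) *
        (((Finset.Icc (-((m / d : ℕ) : ℤ)) ((m / d : ℕ) : ℤ)).filter
            (fun n => n ^ 2 = ((m / d : ℕ) : ℤ))).card : ℤ)
    else 0

/-!
By induction on `n`, Gauss's finite identity `∑ₖ (-1)^k q^(k²) [2n, n+k]_q = (q; q²)ₙ` follows from
one Pascal rule `[m+1, r] = [m, r-1] + q^r [m, r]`, the index shift `k ↦ k - 1`, and the absorption
identity `(1 - q^(m+1-r)) [m+1, r] = (1 - q^(m+1)) [m, r]`. Since `[a+b, a] (q;q)_(a+b) ≡ 1` modulo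
`q^(min a b + 1)`, multiplying the identity by `(q;q)_(2n) = (q; q²)ₙ (q²; q²)ₙ` gives
`θₙ(-q) (q²; q²)ₙ ≡ (q;q)_(2n)²` modulo `q^(n+1)`, where `θₙ` is the theta series truncated at
`|k| ≤ n`. Comparing coefficients below `q^(n+1)` then gives `φ(-q) E(q²) = E(q)²`.
-/

open PowerSeries Finset

theorem Finset.dvd_prod_sub_prod {A ι : Type*} [CommRing A] {s : Finset ι} {x : A} {f g : ι → A}
    (h : ∀ i ∈ s, x ∣ f i - g i) : x ∣ ∏ i ∈ s, f i - ∏ i ∈ s, g i := by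
  simp_rw [← Ideal.mem_span_singleton, ← SModEq.sub_mem] at h ⊢
  exact SModEq.prod h

theorem PowerSeries.eq_of_forall_X_pow_dvd_sub {R : Type*} [CommRing R] {f g : R⟦X⟧}
    (h : ∀ N, (X : R⟦X⟧) ^ (N + 1) ∣ f - g) : f = g := by
  ext N
  simpa [sub_eq_zero] using X_pow_dvd_iff.1 (h N) N N.lt_succ_self

section QPochhammer

variable {R : Type*} [CommRing R]

noncomputable def qPoch (d m : ℕ) : R⟦X⟧ := ∏ k ∈ range m, (1 - X ^ (d * (k + 1)))

noncomputable def qPochOdd (m : ℕ) : R⟦X⟧ := ∏ k ∈ range m, (1 - X ^ (2 * k + 1))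

theorem qPoch_zero (d : ℕ) : (qPoch d 0 : R⟦X⟧) = 1 := prod_range_zero _

theorem qPoch_succ (d m : ℕ) : (qPoch d (m + 1) : R⟦X⟧) = qPoch d m * (1 - X ^ (d * (m + 1))) :=
  prod_range_succ _ m

theorem qPoch_one_two_mul (n : ℕ) : (qPoch 1 (2 * n) : R⟦X⟧) = qPochOdd n * qPoch 2 n := by
  induction n with
  | zero => simp [qPoch, qPochOdd]
  | succ n ih =>
    rw [show 2 * (n + 1) = 2 * n + 1 + 1 by ring, qPoch_succ, qPoch_succ, ih, qPoch_succ,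
      qPochOdd, qPochOdd, prod_range_succ]
    ring

theorem isUnit_qPoch {d : ℕ} (hd : d ≠ 0) (m : ℕ) : IsUnit (qPoch d m : R⟦X⟧) := by
  simp [isUnit_iff_constantCoeff, qPoch, hd]

theorem X_pow_dvd_qPoch_sub (d : ℕ) {a b : ℕ} (hab : a ≤ b) :
    (X : R⟦X⟧) ^ (d * (a + 1)) ∣ qPoch d b - qPoch d a := by
  rw [qPoch, qPoch, ← prod_range_mul_prod_Ico _ hab, ← mul_sub_one]
  refine Dvd.dvd.mul_left ?_ _
  simpa using dvd_prod_sub_prod (s := Ico a b) (f := fun j => 1 - (X : R⟦X⟧) ^ (d * (j + 1)))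
    (g := 1) fun j hj => by
    rw [Pi.one_apply, sub_sub_cancel_left, dvd_neg]
    exact pow_dvd_pow X (Nat.mul_le_mul_left d (by simp at hj; omega))

theorem coeff_qPoch_congr {d : ℕ} (hd : d ≠ 0) {m a b : ℕ} (ha : m ≤ a) (hb : m ≤ b) :
    coeff m (qPoch d a : R⟦X⟧) = coeff m (qPoch d b) := by
  wlog hab : a ≤ b generalizing a b
  · exact (this hb ha (by omega)).symm
  refine (sub_eq_zero.1 ?_).symm
  rw [← map_sub]
  refine X_pow_dvd_iff.1 (X_pow_dvd_qPoch_sub (R := R) d hab) m ?_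
  nlinarith [Nat.one_le_iff_ne_zero.2 hd]

end QPochhammer

theorem X_pow_dvd_E_sub_qPoch {d : ℕ} (hd : d ≠ 0) (n : ℕ) :
    (X : ℤ⟦X⟧) ^ (n + 1) ∣ E d - qPoch d n :=
  X_pow_dvd_iff.2 fun m hm => by
    rw [map_sub, sub_eq_zero, E, coeff_mk]
    exact coeff_qPoch_congr hd m.le_succ (by omega)

section QBinomial

variable {R : Type*} [CommRing R]

/-- The Gaussian binomial coefficient `[m, r]_q`, extended by zero to all `r : ℤ`. -/
noncomputable def qBinom : ℕ → ℤ → R⟦X⟧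
  | 0, r => if r = 0 then 1 else 0
  | m + 1, r => qBinom m (r - 1) + X ^ r.toNat * qBinom m r

theorem qBinom_succ (m : ℕ) (r : ℤ) :
    (qBinom (m + 1) r : R⟦X⟧) = qBinom m (r - 1) + X ^ r.toNat * qBinom m r := rfl

theorem qBinom_eq_zero {m : ℕ} {r : ℤ} (h : r < 0 ∨ m < r) : (qBinom m r : R⟦X⟧) = 0 := by
  induction m generalizing r with
  | zero => exact if_neg (by omega)
  | succ m ih => rw [qBinom_succ, ih (by omega), ih (by omega), mul_zero, add_zero]

theorem qBinom_zero_right (m : ℕ) : (qBinom m 0 : R⟦X⟧) = 1 := by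
  induction m with
  | zero => rfl
  | succ m ih => simp [qBinom_succ, ih, qBinom_eq_zero]

theorem qBinom_self (m : ℕ) : (qBinom m m : R⟦X⟧) = 1 := by
  induction m with
  | zero => rfl
  | succ m ih => simp [qBinom_succ, ih, qBinom_eq_zero]

theorem qBinom_succ_natCast_succ (m r : ℕ) :
    (qBinom (m + 1) ↑(r + 1) : R⟦X⟧) = qBinom m r + X ^ (r + 1) * qBinom m ↑(r + 1) := by
  rw [qBinom_succ, Nat.cast_succ, add_sub_cancel_right, Int.toNat_natCast_add_one]

theorem qBinom_mul_qPoch_mul_qPoch (a b : ℕ) :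
    (qBinom (a + b) a : R⟦X⟧) * (qPoch 1 a * qPoch 1 b) = qPoch 1 (a + b) := by
  induction a generalizing b with
  | zero => simp [qBinom_zero_right, qPoch_zero]
  | succ a iha =>
    induction b with
    | zero => rw [add_zero, qBinom_self, qPoch_zero, one_mul, mul_one]
    | succ b ihb =>
      have h := iha (b + 1)
      rw [← add_assoc, qPoch_succ 1 b] at h
      rw [add_right_comm, qPoch_succ 1 a] at ihb
      rw [← add_assoc, add_right_comm a 1 b, qBinom_succ_natCast_succ, qPoch_succ 1 a,
        qPoch_succ 1 b, qPoch_succ 1 (a + b + 1)]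
      simp only [one_mul] at h ihb ⊢
      linear_combination (1 - X ^ (a + 1)) * h + X ^ (a + 1) * (1 - X ^ (b + 1)) * ihb

theorem isUnit_qPoch_one_mul_qPoch_one (a b : ℕ) : IsUnit (qPoch 1 a * qPoch 1 b : R⟦X⟧) :=
  (isUnit_qPoch one_ne_zero a).mul (isUnit_qPoch one_ne_zero b)

theorem one_sub_X_pow_mul_qBinom_succ (m : ℕ) (r : ℤ) :
    (1 - X ^ ((m + 1 : ℤ) - r).toNat) * (qBinom (m + 1) r : R⟦X⟧) =
      (1 - X ^ (m + 1)) * qBinom m r := by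
  rcases lt_or_ge r 0 with hr | hr
  · simp [qBinom_eq_zero (Or.inl hr)]
  rcases lt_or_ge (m : ℤ) r with hmr | hmr
  · rw [qBinom_eq_zero (Or.inr hmr), mul_zero]
    obtain rfl | hmr := (Int.add_one_le_of_lt hmr).eq_or_lt
    · simp
    · rw [qBinom_eq_zero (by push_cast; omega), mul_zero]
  obtain ⟨a, rfl⟩ := Int.eq_ofNat_of_zero_le hr
  obtain ⟨b, rfl⟩ := Nat.exists_eq_add_of_le (Int.ofNat_le.1 hmr)
  have hb : ((a + b : ℕ) + 1 - a : ℤ).toNat = b + 1 := by omega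
  rw [hb, ← (isUnit_qPoch_one_mul_qPoch_one a b).mul_left_inj]
  have h := qBinom_mul_qPoch_mul_qPoch (R := R) a (b + 1)
  rw [qPoch_succ 1 b, ← add_assoc, qPoch_succ, one_mul] at h
  linear_combination h - (1 - X ^ (a + b + 1)) * qBinom_mul_qPoch_mul_qPoch (R := R) a b

theorem X_pow_dvd_qBinom_mul_qPoch_sub_one (a b : ℕ) :
    (X : R⟦X⟧) ^ (min a b + 1) ∣ qBinom (a + b) a * qPoch 1 (a + b) - 1 := by
  set Q : R⟦X⟧ := qPoch 1 (a + b)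
  have hQa : (X : R⟦X⟧) ^ (min a b + 1) ∣ Q - qPoch 1 a :=
    (pow_dvd_pow X (by omega)).trans (X_pow_dvd_qPoch_sub 1 (Nat.le_add_right a b))
  have hQb : (X : R⟦X⟧) ^ (min a b + 1) ∣ Q - qPoch 1 b :=
    (pow_dvd_pow X (by omega)).trans (X_pow_dvd_qPoch_sub 1 (Nat.le_add_left b a))
  rw [← (isUnit_qPoch_one_mul_qPoch_one a b).dvd_mul_right]
  have h : (qBinom (a + b) a * Q - 1) * (qPoch 1 a * qPoch 1 b) =
      Q * (Q - qPoch 1 b) + qPoch 1 b * (Q - qPoch 1 a) := by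
    linear_combination Q * qBinom_mul_qPoch_mul_qPoch (R := R) a b
  rw [h]
  exact dvd_add (hQb.mul_left Q) (hQa.mul_left _)

end QBinomial

section GaussIdentity

variable {R : Type*} [CommRing R]

theorem neg_one_pow_natAbs_sub_one (k : ℤ) : (-1 : R) ^ (k - 1).natAbs = -(-1) ^ k.natAbs := by
  simp only [← Int.coe_negOnePow, Int.negOnePow_sub, Int.negOnePow_one]
  push_cast
  ring

noncomputable def thetaBinomTerm (m : ℕ) (j k : ℤ) : R⟦X⟧ :=
  (-1) ^ k.natAbs * X ^ (k.natAbs ^ 2) * qBinom m (j + k)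

noncomputable def thetaBinomSum (n : ℕ) : R⟦X⟧ := ∑ᶠ k : ℤ, thetaBinomTerm (2 * n) n k

theorem support_thetaBinomTerm_subset (m : ℕ) (j : ℤ) :
    Function.support (thetaBinomTerm m j : ℤ → R⟦X⟧) ⊆ Icc (-j) (m - j) := fun k hk => by
  by_contra hk'
  exact hk (by rw [thetaBinomTerm, qBinom_eq_zero (by simp at hk'; omega), mul_zero])

theorem hasFiniteSupport_thetaBinomTerm (m : ℕ) (j : ℤ) :
    Function.HasFiniteSupport (thetaBinomTerm m j : ℤ → R⟦X⟧) :=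
  (finite_toSet _).subset (support_thetaBinomTerm_subset m j)

theorem thetaBinomTerm_succ (m : ℕ) (j k : ℤ) :
    (thetaBinomTerm (m + 1) j k : R⟦X⟧) =
      thetaBinomTerm m (j - 1) k + X ^ (j + k).toNat * thetaBinomTerm m j k := by
  rw [thetaBinomTerm, thetaBinomTerm, thetaBinomTerm, qBinom_succ, sub_add_eq_add_sub]
  ring

theorem X_pow_mul_thetaBinomTerm_sub_one (n : ℕ) (k : ℤ) :
    X ^ ((n : ℤ) + 1 + (k - 1)).toNat * thetaBinomTerm (2 * n + 1) (n + 1) (k - 1) =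
      -(X ^ ((n : ℤ) + 1 - k).toNat * thetaBinomTerm (2 * n + 1) n k : R⟦X⟧) := by
  rw [thetaBinomTerm, thetaBinomTerm, show (n : ℤ) + 1 + (k - 1) = n + k by ring]
  by_cases hk : qBinom (2 * n + 1) (n + k) = (0 : R⟦X⟧)
  · simp [hk]
  have hk' : 0 ≤ (n : ℤ) + k ∧ (n : ℤ) + k ≤ 2 * n + 1 := by
    by_contra h
    exact hk (qBinom_eq_zero (by push_cast; omega))
  have hexp : (X : R⟦X⟧) ^ (k - 1).natAbs ^ 2 * X ^ ((n : ℤ) + k).toNat =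
      X ^ k.natAbs ^ 2 * X ^ ((n : ℤ) + 1 - k).toNat := by
    rw [← pow_add, ← pow_add]
    congr 1
    apply Nat.cast_injective (R := ℤ)
    push_cast [Int.toNat_of_nonneg hk'.1, Int.toNat_of_nonneg (by omega : 0 ≤ (n : ℤ) + 1 - k),
      sq_abs]
    ring
  rw [neg_one_pow_natAbs_sub_one]
  linear_combination (-(-1) ^ k.natAbs * qBinom (2 * n + 1) (n + k) : R⟦X⟧) * hexp

theorem one_sub_X_pow_mul_thetaBinomTerm (n : ℕ) (k : ℤ) :
    (1 - X ^ ((n : ℤ) + 1 - k).toNat) * thetaBinomTerm (2 * n + 1) n k =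
      (1 - X ^ (2 * n + 1)) * (thetaBinomTerm (2 * n) n k : R⟦X⟧) := by
  have h := one_sub_X_pow_mul_qBinom_succ (R := R) (2 * n) (n + k)
  rw [show ((2 * n : ℕ) + 1 - (n + k) : ℤ) = n + 1 - k by push_cast; ring] at h
  rw [thetaBinomTerm, thetaBinomTerm]
  linear_combination (-1) ^ k.natAbs * X ^ (k.natAbs ^ 2) * h

theorem thetaBinomSum_zero : (thetaBinomSum 0 : R⟦X⟧) = 1 := by
  rw [thetaBinomSum, finsum_eq_single _ 0 fun k hk => ?_]
  · simp [thetaBinomTerm, qBinom_zero_right]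
  · rw [thetaBinomTerm, qBinom_eq_zero (by omega), mul_zero]

theorem thetaBinomSum_succ (n : ℕ) :
    (thetaBinomSum (n + 1) : R⟦X⟧) = (1 - X ^ (2 * n + 1)) * thetaBinomSum n := by
  have hT (j : ℤ) := hasFiniteSupport_thetaBinomTerm (R := R) (2 * n + 1) j
  calc (thetaBinomSum (n + 1) : R⟦X⟧)
      = ∑ᶠ k, (thetaBinomTerm (2 * n + 1) n k : R⟦X⟧) +
          ∑ᶠ k, X ^ ((n : ℤ) + 1 + k).toNat * thetaBinomTerm (2 * n + 1) (n + 1) k := by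
        rw [thetaBinomSum, ← finsum_add_distrib (hT n) ((hT _).fun_mul_right _)]
        refine finsum_congr fun k => ?_
        rw [show 2 * (n + 1) = 2 * n + 1 + 1 by ring, thetaBinomTerm_succ]
        push_cast
        rw [add_sub_cancel_right]
    _ = ∑ᶠ k, (thetaBinomTerm (2 * n + 1) n k : R⟦X⟧) +
          ∑ᶠ k, X ^ ((n : ℤ) + 1 + (k - 1)).toNat * thetaBinomTerm (2 * n + 1) (n + 1) (k - 1) := by
        congr 1
        exact (finsum_comp_equiv (Equiv.subRight 1)).symm
    _ = ∑ᶠ k, (thetaBinomTerm (2 * n + 1) n k : R⟦X⟧) -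
          ∑ᶠ k, X ^ ((n : ℤ) + 1 - k).toNat * thetaBinomTerm (2 * n + 1) n k := by
        rw [finsum_congr (X_pow_mul_thetaBinomTerm_sub_one n), finsum_neg_distrib, sub_eq_add_neg]
    _ = ∑ᶠ k, (1 - X ^ (2 * n + 1)) * (thetaBinomTerm (2 * n) n k : R⟦X⟧) := by
        rw [← finsum_sub_distrib (hT n) ((hT n).fun_mul_right _)]
        exact finsum_congr fun k => by rw [← one_sub_X_pow_mul_thetaBinomTerm, one_sub_mul]
    _ = (1 - X ^ (2 * n + 1)) * thetaBinomSum n :=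
        (mul_finsum' _ _ (hasFiniteSupport_thetaBinomTerm _ _)).symm

theorem thetaBinomSum_eq_qPochOdd (n : ℕ) : (thetaBinomSum n : R⟦X⟧) = qPochOdd n := by
  induction n with
  | zero => rw [thetaBinomSum_zero, qPochOdd, prod_range_zero]
  | succ n ih => rw [thetaBinomSum_succ, ih, qPochOdd, qPochOdd, prod_range_succ, mul_comm]

end GaussIdentity

section Theta

variable {R : Type*} [CommRing R]

noncomputable def thetaTrunc (n : ℕ) : R⟦X⟧ :=
  ∑ k ∈ Icc (-(n : ℤ)) n, (-1) ^ k.natAbs * X ^ (k.natAbs ^ 2)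

theorem coeff_neg_one_pow_mul_X_pow (m j e : ℕ) :
    coeff m ((-1 : R⟦X⟧) ^ j * X ^ e) = if m = e then (-1) ^ j else 0 := by
  rw [show (-1 : R⟦X⟧) = C (-1) by simp, ← map_pow, coeff_C_mul_X_pow]

theorem X_pow_dvd_thetaTrunc_sub (n : ℕ) :
    (X : R⟦X⟧) ^ (n + 1) ∣ thetaTrunc n - thetaBinomSum n * qPoch 1 (2 * n) := by
  have hsupp : Function.support (thetaBinomTerm (2 * n) n : ℤ → R⟦X⟧) ⊆ Icc (-(n : ℤ)) n := by
    simpa [two_mul] using support_thetaBinomTerm_subset (R := R) (2 * n) n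
  rw [thetaBinomSum, finsum_eq_sum_of_support_subset _ hsupp, sum_mul, thetaTrunc,
    ← sum_sub_distrib]
  refine dvd_sum fun k hk => ?_
  rw [mem_Icc] at hk
  obtain ⟨a, ha⟩ : ∃ a : ℕ, (a : ℤ) = n + k := ⟨(n + k).toNat, by omega⟩
  obtain ⟨b, hb⟩ : ∃ b : ℕ, (b : ℤ) = n - k := ⟨(n - k).toNat, by omega⟩
  have hab : 2 * n = a + b := by omega
  have hexp : n + 1 ≤ k.natAbs ^ 2 + (min a b + 1) := by
    have := Nat.le_self_pow two_ne_zero k.natAbs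
    omega
  have h := dvd_sub_comm.1 (X_pow_dvd_qBinom_mul_qPoch_sub_one (R := R) a b)
  rw [thetaBinomTerm, ← ha, hab, mul_assoc _ (qBinom _ _), ← mul_one_sub, mul_assoc]
  refine Dvd.dvd.mul_left ((pow_dvd_pow X hexp).trans ?_) _
  rw [pow_add]
  exact mul_dvd_mul_left _ h

end Theta

theorem coeff_thetaTrunc_eq_coeff_phiNeg {m n : ℕ} (hmn : m ≤ n) :
    coeff m (thetaTrunc n : ℤ⟦X⟧) = coeff m (phiNeg 1) := by
  have hsign : ∀ z ∈ {z ∈ Icc (-(m : ℤ)) m | z ^ 2 = (m : ℤ)}, (-1 : ℤ) ^ z.natAbs = (-1) ^ m := by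
    intro z hz
    rw [← Int.coe_negOnePow, ← Int.coe_negOnePow_natCast, ← (mem_filter.1 hz).2, sq,
      Int.negOnePow_mul_self, Int.cast_id]
  have hsquares :
      {k ∈ Icc (-(n : ℤ)) n | m = k.natAbs ^ 2} = {z ∈ Icc (-(m : ℤ)) m | z ^ 2 = (m : ℤ)} := by
    ext z
    have := Nat.le_self_pow two_ne_zero z.natAbs
    have : ((z.natAbs ^ 2 : ℕ) : ℤ) = z ^ 2 := by push_cast; exact sq_abs z
    simp only [mem_filter, mem_Icc]
    constructor <;> rintro ⟨_, h⟩ <;> refine ⟨?_, ?_⟩ <;> omega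
  simp only [thetaTrunc, map_sum, coeff_neg_one_pow_mul_X_pow, ← sum_filter, hsquares,
    sum_congr rfl hsign, sum_const, nsmul_eq_mul, phiNeg, coeff_mk, one_dvd, Nat.div_one, if_true]
  ring

theorem X_pow_dvd_phiNeg_sub_thetaTrunc (n : ℕ) :
    (X : ℤ⟦X⟧) ^ (n + 1) ∣ phiNeg 1 - thetaTrunc n :=
  X_pow_dvd_iff.2 fun m hm => by rw [map_sub, coeff_thetaTrunc_eq_coeff_phiNeg (by omega), sub_self]

/-- As formal power series, `φ(-q) = E(q)^2 / E(q^2)`, stated multiplicatively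
as `φ(-q) · E(q^2) = E(q)^2`. -/
theorem phiNeg_eq : phiNeg 1 * E 2 = (E 1) ^ 2 := by
  refine eq_of_forall_X_pow_dvd_sub fun N => ?_
  let π := Ideal.Quotient.mk (Ideal.span {(X : ℤ⟦X⟧) ^ (N + 1)})
  have hπ {f g : ℤ⟦X⟧} (h : X ^ (N + 1) ∣ f - g) : π f = π g :=
    Ideal.Quotient.eq.2 (Ideal.mem_span_singleton.2 h)
  suffices π (phiNeg 1 * E 2) = π (E 1 ^ 2) from
    Ideal.mem_span_singleton.1 (Ideal.Quotient.eq.1 this)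
  have hφ : π (phiNeg 1) = π (thetaBinomSum N * qPoch 1 (2 * N)) :=
    (hπ (X_pow_dvd_phiNeg_sub_thetaTrunc N)).trans (hπ (X_pow_dvd_thetaTrunc_sub N))
  have hE₁ : π (E 1) = π (qPoch 1 (2 * N)) :=
    hπ ((pow_dvd_pow X (by omega)).trans (X_pow_dvd_E_sub_qPoch one_ne_zero (2 * N)))
  have hE₂ : π (E 2) = π (qPoch 2 N) := hπ (X_pow_dvd_E_sub_qPoch two_ne_zero N)
  rw [map_mul, map_pow, hφ, hE₁, hE₂, ← map_mul, ← map_pow, thetaBinomSum_eq_qPochOdd,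
    qPoch_one_two_mul]
  congr 1
  ring
end

section
/- For all positive integers i and j, the 5-adic valuation of a(i,j) satisfies π(a(i,j)) ≥ ⌊(5j-i-1)/6⌋, where (a(i,j)) is the integer matrix whose first five rows are explicitly given and which satisfies the recurrence a(i,j) = 55a(i-1,j-1) - 300a(i-1,j-2) + 875a(i-1,j-3) - 1250a(i-1,j-4) + 625a(i-1,j-5) - 60a(i-2,j-1) + 175a(i-2,j-2) - 250a(i-2,j-3) + 125a(i-2,j-4) + 35a(i-3,j-1) - 50a(i-3,j-2) + 25a(i-3,j-3) - 10a(i-4,j-1) + 5a(i-4,j-2) + a(i-5,j-1) for i ≥ 6, with unspecified entries set to 0. -/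
/-- Key arithmetic lemma: if `m ≤ 6v` and `5^⌊(N-m)/6⌋ ∣ y` then `5^⌊N/6⌋ ∣ 5^v * y`. -/
lemma key_shift (N m : ℤ) (v : ℕ) (hm : m ≤ 6 * v) (y : ℤ)
    (h : (5:ℤ) ^ (((N - m) / 6).toNat) ∣ y) :
    (5:ℤ) ^ (N / 6).toNat ∣ 5 ^ v * y := by
  have hle : (N / 6).toNat ≤ v + ((N - m) / 6).toNat := by omega
  calc (5:ℤ) ^ (N / 6).toNat ∣ 5 ^ (v + ((N - m) / 6).toNat) := pow_dvd_pow _ hle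
    _ = 5 ^ v * 5 ^ (((N - m) / 6).toNat) := pow_add _ _ _
    _ ∣ 5 ^ v * y := mul_dvd_mul_left _ h

/-- For all positive `i, j`, the 5-adic valuation of `a(i,j)` satisfies
`π(a(i,j)) ≥ ⌊(5j-i-1)/6⌋` (with `π(0) = ∞`), given that the bound holds for the
first five rows and that `a` satisfies the recurrence for `i ≥ 6`.  The bound
`π(n) ≥ v` is expressed as `5^(max v 0) ∣ n`, via `Int.toNat`. -/
theorem a_five_adic_bound (a : ℤ → ℤ → ℤ)
    (hzero : ∀ i j : ℤ, i ≤ 0 ∨ j ≤ 0 → a i j = 0)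
    (hrec : ∀ i j : ℤ, 6 ≤ i →
      a i j = 55 * a (i-1) (j-1) - 300 * a (i-1) (j-2) + 875 * a (i-1) (j-3)
          - 1250 * a (i-1) (j-4) + 625 * a (i-1) (j-5)
          - 60 * a (i-2) (j-1) + 175 * a (i-2) (j-2) - 250 * a (i-2) (j-3)
          + 125 * a (i-2) (j-4)
          + 35 * a (i-3) (j-1) - 50 * a (i-3) (j-2) + 25 * a (i-3) (j-3)
          - 10 * a (i-4) (j-1) + 5 * a (i-4) (j-2)
          + a (i-5) (j-1))
    (hbase : ∀ i j : ℤ, 1 ≤ i → i ≤ 5 → 1 ≤ j →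
      (5 : ℤ) ^ ((5 * j - i - 1) / 6).toNat ∣ a i j) :
    ∀ i j : ℤ, 1 ≤ i → 1 ≤ j → (5 : ℤ) ^ ((5 * j - i - 1) / 6).toNat ∣ a i j := by
  have main : ∀ n : ℕ, ∀ i j : ℤ, 1 ≤ i → i ≤ (n : ℤ) → 1 ≤ j →
      (5 : ℤ) ^ ((5 * j - i - 1) / 6).toNat ∣ a i j := by
    intro n
    induction n with
    | zero => intro i j h1 h2 _; exact absurd (h1.trans h2) (by norm_num)
    | succ n ih =>
      intro i j h1 h2 hj
      by_cases h5 : i ≤ 5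
      · exact hbase i j h1 h5 hj
      · have h6 : 6 ≤ i := by omega
        have get : ∀ k l : ℤ, 1 ≤ k → k ≤ 5 → 1 ≤ l →
            (5:ℤ) ^ (((5*j - i - 1 - (5*l - k)) / 6).toNat) ∣ a (i-k) (j-l) := by
          intro k l hk1 hk5 hl
          have heq : 5*j - i - 1 - (5*l - k) = 5*(j-l) - (i-k) - 1 := by ring
          rw [heq]
          by_cases hjl : 1 ≤ j - l
          · exact ih (i-k) (j-l) (by omega) (by omega) hjl
          · rw [hzero (i-k) (j-l) (Or.inr (by omega))]; exact dvd_zero _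
        have term : ∀ (k l : ℤ) (v : ℕ) (d : ℤ), 1 ≤ k → k ≤ 5 → 1 ≤ l →
            5*l - k ≤ 6 * v →
            (5:ℤ) ^ ((5*j - i - 1) / 6).toNat ∣ (d * 5 ^ v) * a (i-k) (j-l) := by
          intro k l v d hk1 hk5 hl hv
          have h := key_shift (5*j - i - 1) (5*l - k) v hv _ (get k l hk1 hk5 hl)
          have heq : (d * 5 ^ v) * a (i-k) (j-l) = d * (5 ^ v * a (i-k) (j-l)) := by ring
          rw [heq]
          exact h.mul_left d
        rw [hrec i j h6]
        have T1 := term 1 1 1 11 (by norm_num) (by norm_num) (by norm_num) (by norm_num)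
        have T2 := term 1 2 2 12 (by norm_num) (by norm_num) (by norm_num) (by norm_num)
        have T3 := term 1 3 3 7 (by norm_num) (by norm_num) (by norm_num) (by norm_num)
        have T4 := term 1 4 4 2 (by norm_num) (by norm_num) (by norm_num) (by norm_num)
        have T5 := term 1 5 4 1 (by norm_num) (by norm_num) (by norm_num) (by norm_num)
        have T6 := term 2 1 1 12 (by norm_num) (by norm_num) (by norm_num) (by norm_num)
        have T7 := term 2 2 2 7 (by norm_num) (by norm_num) (by norm_num) (by norm_num)
        have T8 := term 2 3 3 2 (by norm_num) (by norm_num) (by norm_num) (by norm_num)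
        have T9 := term 2 4 3 1 (by norm_num) (by norm_num) (by norm_num) (by norm_num)
        have T10 := term 3 1 1 7 (by norm_num) (by norm_num) (by norm_num) (by norm_num)
        have T11 := term 3 2 2 2 (by norm_num) (by norm_num) (by norm_num) (by norm_num)
        have T12 := term 3 3 2 1 (by norm_num) (by norm_num) (by norm_num) (by norm_num)
        have T13 := term 4 1 1 2 (by norm_num) (by norm_num) (by norm_num) (by norm_num)
        have T14 := term 4 2 1 1 (by norm_num) (by norm_num) (by norm_num) (by norm_num)
        have T15 := term 5 1 0 1 (by norm_num) (by norm_num) (by norm_num) (by norm_num)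
        norm_num at T1 T2 T3 T4 T5 T6 T7 T8 T9 T10 T11 T12 T13 T14 T15
        exact dvd_add (dvd_add (dvd_sub (dvd_add (dvd_sub (dvd_add (dvd_add (dvd_sub
          (dvd_add (dvd_sub (dvd_add (dvd_sub (dvd_add (dvd_sub T1 T2) T3) T4) T5) T6)
          T7) T8) T9) T10) T11) T12) T13) T14) T15
  intro i j hi hj
  exact main i.toNat i j hi (by omega) hj
end

section
/- Let (m(i,j)) be any integer-matrix satisfying m(i,j) = 55m(i-1,j-1) - 300m(i-1,j-2) + 875m(i-1,j-3) - 1250m(i-1,j-4) + 625m(i-1,j-5) - 60m(i-2,j-1) + 175m(i-2,j-2) - 250m(i-2,j-3) + 125m(i-2,j-4) + 35m(i-3,j-1) - 50m(i-3,j-2) + 25m(i-3,j-3) - 10m(i-4,j-1) + 5m(i-4,j-2) + m(i-5,j-1) for i ≥ 6 (entries with nonpositive index are 0). If there is an integer c such that π(m(i,j)) ≥ ⌊(5j-i+c)/6⌋ for all 1 ≤ i ≤ 5 and all j ≥ 1, then π(m(i,j)) ≥ ⌊(5j-i+c)/6⌋ for all i, j ≥ 1, where π is the 5-adic valuation with π(0)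 = ∞. -/
/-- Each term of the recurrence: coefficient `C = 5^v * u`, shift `(r,k)` with
`5k - r ≤ 6v`, gives the required divisibility. -/
lemma term_dvd (a : ℤ → ℤ → ℤ) (c : ℤ)
    (hzero : ∀ i j : ℤ, i ≤ 0 ∨ j ≤ 0 → a i j = 0)
    (i j r k C u : ℤ) (v : ℕ)
    (IH : ∀ i' j' : ℤ, 1 ≤ i' → i' < i → 1 ≤ j' →
      (5 : ℤ) ^ ((5 * j' - i' + c) / 6).toNat ∣ a i' j')
    (hi : 6 ≤ i) (hr : 1 ≤ r) (hr5 : r ≤ 5) (hk : 1 ≤ k)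
    (hC : C = 5 ^ v * u) (hd : 5 * k - r ≤ 6 * (v : ℤ)) :
    (5 : ℤ) ^ ((5 * j - i + c) / 6).toNat ∣ C * a (i - r) (j - k) := by
  by_cases hjk : j - k ≤ 0
  · rw [hzero _ _ (Or.inr hjk), mul_zero]; exact dvd_zero _
  · push_neg at hjk
    have h1 : (5 : ℤ) ^ ((5 * (j - k) - (i - r) + c) / 6).toNat ∣ a (i - r) (j - k) :=
      IH (i - r) (j - k) (by omega) (by omega) (by omega)
    have h2 : ((5 * j - i + c) / 6).toNat ≤ ((5 * (j - k) - (i - r) + c) / 6).toNat + v := by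
      omega
    have h3 : (5 : ℤ) ^ ((5 * j - i + c) / 6).toNat ∣
        5 ^ v * a (i - r) (j - k) := by
      calc (5 : ℤ) ^ ((5 * j - i + c) / 6).toNat ∣
          5 ^ (((5 * (j - k) - (i - r) + c) / 6).toNat + v) := pow_dvd_pow _ h2
        _ = 5 ^ v * 5 ^ ((5 * (j - k) - (i - r) + c) / 6).toNat := by ring
        _ ∣ 5 ^ v * a (i - r) (j - k) := mul_dvd_mul_left _ h1
    calc (5 : ℤ) ^ ((5 * j - i + c) / 6).toNat ∣ 5 ^ v * a (i - r) (j - k) := h3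
      _ ∣ u * (5 ^ v * a (i - r) (j - k)) := dvd_mul_left _ _
      _ = C * a (i - r) (j - k) := by rw [hC]; ring


/-- Let `m` (here `a`) be any integer matrix satisfying the recurrence for `i ≥ 6`
(entries with nonpositive index being `0`).  If there is an integer `c` such that
`π(a(i,j)) ≥ ⌊(5j-i+c)/6⌋` for all `1 ≤ i ≤ 5` and `j ≥ 1`, then the same bound holds
for all `i, j ≥ 1`.  Here `π` is the 5-adic valuation with `π(0) = ∞`, and the bound
`π(n) ≥ v` is expressed as `5^(max v 0) ∣ n`, via `Int.toNat`. -/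
theorem matrix_five_adic_bound (a : ℤ → ℤ → ℤ) (c : ℤ)
    (hzero : ∀ i j : ℤ, i ≤ 0 ∨ j ≤ 0 → a i j = 0)
    (hrec : ∀ i j : ℤ, 6 ≤ i →
      a i j = 55 * a (i-1) (j-1) - 300 * a (i-1) (j-2) + 875 * a (i-1) (j-3)
          - 1250 * a (i-1) (j-4) + 625 * a (i-1) (j-5)
          - 60 * a (i-2) (j-1) + 175 * a (i-2) (j-2) - 250 * a (i-2) (j-3)
          + 125 * a (i-2) (j-4)
          + 35 * a (i-3) (j-1) - 50 * a (i-3) (j-2) + 25 * a (i-3) (j-3)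
          - 10 * a (i-4) (j-1) + 5 * a (i-4) (j-2)
          + a (i-5) (j-1))
    (hbase : ∀ i j : ℤ, 1 ≤ i → i ≤ 5 → 1 ≤ j →
      (5 : ℤ) ^ ((5 * j - i + c) / 6).toNat ∣ a i j) :
    ∀ i j : ℤ, 1 ≤ i → 1 ≤ j → (5 : ℤ) ^ ((5 * j - i + c) / 6).toNat ∣ a i j := by
  have main : ∀ n : ℕ, ∀ i j : ℤ, i.toNat ≤ n → 1 ≤ i → 1 ≤ j →
      (5 : ℤ) ^ ((5 * j - i + c) / 6).toNat ∣ a i j := by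
    intro n
    induction n with
    | zero => intro i j hn hi hj; omega
    | succ n ih =>
      intro i j hn hi hj
      by_cases hi5 : i ≤ 5
      · exact hbase i j hi hi5 hj
      · push_neg at hi5
        have hi6 : 6 ≤ i := hi5
        have IH : ∀ i' j' : ℤ, 1 ≤ i' → i' < i → 1 ≤ j' →
            (5 : ℤ) ^ ((5 * j' - i' + c) / 6).toNat ∣ a i' j' := by
          intro i' j' h1 h2 h3
          exact ih i' j' (by omega) h1 h3
        rw [hrec i j hi6]
        have t01 := term_dvd a c hzero i j 1 1 55 11 1 IH hi6 (by omega) (by omega) (by omega) (by norm_num) (by omega)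
        have t02 := term_dvd a c hzero i j 1 2 300 12 2 IH hi6 (by omega) (by omega) (by omega) (by norm_num) (by omega)
        have t03 := term_dvd a c hzero i j 1 3 875 7 3 IH hi6 (by omega) (by omega) (by omega) (by norm_num) (by omega)
        have t04 := term_dvd a c hzero i j 1 4 1250 2 4 IH hi6 (by omega) (by omega) (by omega) (by norm_num) (by omega)
        have t05 := term_dvd a c hzero i j 1 5 625 1 4 IH hi6 (by omega) (by omega) (by omega) (by norm_num) (by omega)
        have t06 := term_dvd a c hzero i j 2 1 60 12 1 IH hi6 (by omega) (by omega) (by omega) (by norm_num) (by omega)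
        have t07 := term_dvd a c hzero i j 2 2 175 7 2 IH hi6 (by omega) (by omega) (by omega) (by norm_num) (by omega)
        have t08 := term_dvd a c hzero i j 2 3 250 2 3 IH hi6 (by omega) (by omega) (by omega) (by norm_num) (by omega)
        have t09 := term_dvd a c hzero i j 2 4 125 1 3 IH hi6 (by omega) (by omega) (by omega) (by norm_num) (by omega)
        have t10 := term_dvd a c hzero i j 3 1 35 7 1 IH hi6 (by omega) (by omega) (by omega) (by norm_num) (by omega)
        have t11 := term_dvd a c hzero i j 3 2 50 2 2 IH hi6 (by omega) (by omega) (by omega) (by norm_num) (by omega)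
        have t12 := term_dvd a c hzero i j 3 3 25 1 2 IH hi6 (by omega) (by omega) (by omega) (by norm_num) (by omega)
        have t13 := term_dvd a c hzero i j 4 1 10 2 1 IH hi6 (by omega) (by omega) (by omega) (by norm_num) (by omega)
        have t14 := term_dvd a c hzero i j 4 2 5 1 1 IH hi6 (by omega) (by omega) (by omega) (by norm_num) (by omega)
        have t15 := term_dvd a c hzero i j 5 1 1 1 0 IH hi6 (by omega) (by omega) (by omega) (by norm_num) (by omega)
        have e : 55 * a (i-1) (j-1) - 300 * a (i-1) (j-2) + 875 * a (i-1) (j-3)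
          - 1250 * a (i-1) (j-4) + 625 * a (i-1) (j-5)
          - 60 * a (i-2) (j-1) + 175 * a (i-2) (j-2) - 250 * a (i-2) (j-3)
          + 125 * a (i-2) (j-4)
          + 35 * a (i-3) (j-1) - 50 * a (i-3) (j-2) + 25 * a (i-3) (j-3)
          - 10 * a (i-4) (j-1) + 5 * a (i-4) (j-2)
          + a (i-5) (j-1)
          = 55 * a (i-1) (j-1) + (300 * a (i-1) (j-2)) * (-1) + 875 * a (i-1) (j-3)
          + (1250 * a (i-1) (j-4)) * (-1) + 625 * a (i-1) (j-5)
          + (60 * a (i-2) (j-1)) * (-1) + 175 * a (i-2) (j-2) + (250 * a (i-2) (j-3)) * (-1)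
          + 125 * a (i-2) (j-4)
          + 35 * a (i-3) (j-1) + (50 * a (i-3) (j-2)) * (-1) + 25 * a (i-3) (j-3)
          + (10 * a (i-4) (j-1)) * (-1) + 5 * a (i-4) (j-2)
          + 1 * a (i-5) (j-1) := by ring
        rw [e]
        exact ((((((((((((((t01.add (t02.mul_right _)).add t03).add (t04.mul_right _)).add
          t05).add (t06.mul_right _)).add t07).add (t08.mul_right _)).add t09).add
          t10).add (t11.mul_right _)).add t12).add (t13.mul_right _)).add t14).add t15)
  intro i j hi hj
  exact main i.toNat i j le_rfl hi hj
end

section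
/- Let (t(i,j)) be an integer matrix whose 5-adic valuations satisfy π(t(i,j)) ≥ min_{k≥1} (⌊(5k-i-1)/6⌋ + ⌊(5j-k+2)/6⌋), and define sequences d_{2α+1}(j) = ∑_{i≥1} t(i,j) d_{2α-1}(i) (finitely supported), with d_1 = (5, 0, 0, ...). Then for all α ≥ 1 and j ≥ 1, π(d_{2α-1}(j)) ≥ α + ⌊(5j-5)/6⌋. -/
lemma key_div_bound (i j k : ℕ) (hi : 1 ≤ i) (hj : 1 ≤ j) (hk : 1 ≤ k) :
    1 + (5 * j - 5) / 6 ≤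
      ((5 * (k : ℤ) - i - 1).fdiv 6 + (5 * (j : ℤ) - k + 2).fdiv 6).toNat + (5 * i - 5) / 6 := by
  rw [Int.fdiv_eq_ediv_of_nonneg _ (by norm_num), Int.fdiv_eq_ediv_of_nonneg _ (by norm_num)]
  rcases Nat.lt_or_ge i 4 with hi4 | hi4
  · rcases Nat.lt_or_ge k 4 with hk4 | hk4
    · interval_cases i <;> interval_cases k <;> omega
    · interval_cases i <;> omega
  · rcases Nat.lt_or_ge k 4 with hk4 | hk4
    · interval_cases k <;> omega
    · omega

/-- Let `t` be an integer matrix with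
`π(t(i,j)) ≥ min_{k≥1} (⌊(5k-i-1)/6⌋ + ⌊(5j-k+2)/6⌋)` (expressed equivalently:
for some `k ≥ 1` the bound `5^(max(·,0)) ∣ t i j` holds), and let `d α j` denote
`d_{2α-1}(j)`, with `d_1 = (5,0,0,…)`, each `d α` finitely supported, and
`d_{2α+1}(j) = ∑_{i≥1} t(i,j) d_{2α-1}(i)`.  Then
`π(d_{2α-1}(j)) ≥ α + ⌊(5j-5)/6⌋` for all `α, j ≥ 1`. -/
theorem d_five_adic_bound (t : ℕ → ℕ → ℤ) (d : ℕ → ℕ → ℤ)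
    (ht : ∀ i j : ℕ, 1 ≤ i → 1 ≤ j → ∃ k : ℕ, 1 ≤ k ∧
      (5 : ℤ) ^ (((5 * (k : ℤ) - i - 1).fdiv 6 + (5 * (j : ℤ) - k + 2).fdiv 6).toNat) ∣ t i j)
    (hd11 : d 1 1 = 5) (hd1 : ∀ j : ℕ, 2 ≤ j → d 1 j = 0)
    (hfin : ∀ α : ℕ, 1 ≤ α → ∃ N : ℕ, ∀ i : ℕ, N < i → d α i = 0)
    (hrec : ∀ α : ℕ, 1 ≤ α → ∀ j N : ℕ, (∀ i : ℕ, N < i → d α i = 0) →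
      d (α + 1) j = ∑ i ∈ Finset.Icc 1 N, t i j * d α i) :
    ∀ α j : ℕ, 1 ≤ α → 1 ≤ j → (5 : ℤ) ^ (α + (5 * j - 5) / 6) ∣ d α j := by
  intro α
  induction α with
  | zero => intro j h; omega
  | succ n ih =>
    intro j _ hj
    rcases Nat.lt_or_ge n 1 with hn | hn
    · -- n = 0, so α = 1
      have hn0 : n = 0 := by omega
      subst hn0
      rcases Nat.lt_or_ge j 2 with hj2 | hj2
      · have : j = 1 := by omega
        subst this
        simp [hd11]
      · rw [hd1 j hj2]
        exact dvd_zero _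
    · -- inductive step
      obtain ⟨N, hN⟩ := hfin n hn
      rw [hrec n hn j N hN]
      apply Finset.dvd_sum
      intro i hiN
      have hi1 : 1 ≤ i := (Finset.mem_Icc.mp hiN).1
      obtain ⟨k, hk1, hkdvd⟩ := ht i j hi1 hj
      have hdiv : (5 : ℤ) ^ (((5 * (k : ℤ) - i - 1).fdiv 6 + (5 * (j : ℤ) - k + 2).fdiv 6).toNat
          + (n + (5 * i - 5) / 6)) ∣ t i j * d n i :=
        pow_add (5:ℤ) _ _ ▸ mul_dvd_mul hkdvd (ih i hn hi1)
      refine dvd_trans (pow_dvd_pow 5 ?_) hdiv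
      have := key_div_bound i j k hi1 hj hk1
      omega
end
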